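/- Conformal Risk Control guarantee: Let L_1, …, L_{n+1} : [0,1] → (−∞, B] be random non-increasing, right-continuous functions bounded above by B < ∞, forming an exchangeable sequence, and suppose there exists λ_max ∈ [0,1] with L_i(λ_max) ≤ α almost surely for all i. Define λ̂ = inf{ λ ∈ [0,1] : (n/(n+1)) R̂_n(λ) + B/(n+1) ≤ α }, where R̂_n(λ) = (1/n) Σ_{i=1}^n L_i(λ). Then E[L_{n+1}(λ̂)] ≤ α. -/

import Mathlib

open scoped Classical

open MeasureTheory

/-- The adjusted empirical risk threshold set used in Conformal Risk Control. -/
def crcSet {n : ℕ} (L : Fin (n + 1) → ℝ → ℝ) (B α : ℝ) : Set ℝ :=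
  {lam : ℝ | lam ∈ Set.Icc (0:ℝ) 1 ∧
    ((n : ℝ) / (n + 1)) * ((1 / (n : ℝ)) * ∑ i : Fin n, L i.castSucc lam)
      + B / (n + 1) ≤ α}

/-- `λ̂`: the infimum of the CRC set, taken to be `λ_max` when the set is empty. -/
noncomputable def lamHat {n : ℕ} (L : Fin (n + 1) → ℝ → ℝ) (B α lamMax : ℝ) : ℝ :=
  if (crcSet L B α).Nonempty then sInf (crcSet L B α) else lamMax

open Filter Topology

namespace CRCaux


variable {n : ℕ}

/-- The "all n+1 losses" threshold set, with condition `∑ i, M i lam ≤ c`. -/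
def fullSet (M : Fin (n+1) → ℝ → ℝ) (c : ℝ) : Set ℝ :=
  {lam | lam ∈ Set.Icc (0:ℝ) 1 ∧ ∑ i, M i lam ≤ c}

noncomputable def lamStar (M : Fin (n+1) → ℝ → ℝ) (c lamMax : ℝ) : ℝ :=
  if (fullSet M c).Nonempty then sInf (fullSet M c) else lamMax

noncomputable def ek (k : ℕ) (M : Fin (n+1) → ℝ → ℝ) (c lamMax : ℝ) : ℝ :=
  if ∑ i, M i 1 ≤ c then
    Finset.univ.inf' Finset.univ_nonempty
      (fun i : Fin (2^k+1) =>
        if ∑ j, M j (((i : ℕ) : ℝ) / 2^k) ≤ c then ((i : ℕ) : ℝ) / 2^k else 1)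
  else lamMax

noncomputable def G (j : Fin (n+1)) (c lamMax : ℝ) (M : Fin (n+1) → ℝ → ℝ) : ℝ :=
  liminf (fun k => M j (ek k M c lamMax)) atTop

lemma measurable_eval (j : Fin (n+1)) (t : ℝ) :
    Measurable fun M : Fin (n+1) → ℝ → ℝ => M j t :=
  (measurable_pi_apply t).comp (measurable_pi_apply j)

lemma measurable_sumeval (t : ℝ) :
    Measurable fun M : Fin (n+1) → ℝ → ℝ => ∑ i, M i t :=
  Finset.measurable_sum _ fun i _ => measurable_eval i t

lemma measurable_inf'' {X : Type*} [MeasurableSpace X] {ι : Type*} {s : Finset ι}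
    (hs : s.Nonempty) {f : ι → X → ℝ} (hf : ∀ i ∈ s, Measurable (f i)) :
    Measurable fun x => s.inf' hs (fun i => f i x) := by
  have h : Measurable (s.inf' hs f) :=
    Finset.inf'_induction hs _ (fun _f hf _g hg => hf.min hg) hf
  have h2 : (fun x => s.inf' hs fun i => f i x) = s.inf' hs f :=
    funext fun x => (Finset.inf'_apply hs f x).symm
  rw [h2]; exact h

lemma measurable_ek (k : ℕ) (c lamMax : ℝ) :
    Measurable fun M : Fin (n+1) → ℝ → ℝ => ek k M c lamMax := by
  unfold ek
  refine Measurable.ite (measurableSet_le (measurable_sumeval 1) measurable_const) ?_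
    measurable_const
  have : ∀ i : Fin (2^k+1), Measurable fun M : Fin (n+1) → ℝ → ℝ =>
      if ∑ j, M j (((i : ℕ) : ℝ) / 2^k) ≤ c then ((i : ℕ) : ℝ) / 2^k else (1:ℝ) := by
    intro i
    exact Measurable.ite (measurableSet_le (measurable_sumeval _) measurable_const)
      measurable_const measurable_const
  exact measurable_inf'' Finset.univ_nonempty fun i _ => this i

lemma measurable_comp_countable {X : Type*} [MeasurableSpace X] {e : X → ℝ} (he : Measurable e)
    {T : Set ℝ} (hT : T.Countable) (hrange : ∀ x, e x ∈ T)
    {g : X → ℝ → ℝ} (hg : ∀ q ∈ T, Measurable fun x => g x q) :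
    Measurable fun x => g x (e x) := by
  intro s hs
  have heq : (fun x => g x (e x)) ⁻¹' s = ⋃ q ∈ T, ({x | e x = q} ∩ {x | g x q ∈ s}) := by
    ext x
    simp only [Set.mem_preimage, Set.mem_iUnion, Set.mem_inter_iff, Set.mem_setOf_eq]
    constructor
    · intro h; exact ⟨e x, hrange x, rfl, h⟩
    · rintro ⟨q, hq, hqe, h⟩; rw [← hqe] at h; exact h
  rw [heq]
  refine MeasurableSet.biUnion hT fun q hq => MeasurableSet.inter ?_ (hg q hq hs)
  exact he (measurableSet_singleton q)

lemma ek_mem_range (k : ℕ) (c lamMax : ℝ) (M : Fin (n+1) → ℝ → ℝ) :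
    ek k M c lamMax ∈
      insert lamMax (insert (1:ℝ) (Set.range fun i : Fin (2^k+1) => ((i : ℕ) : ℝ) / 2^k)) := by
  unfold ek
  split_ifs with h
  · obtain ⟨i, _, hie⟩ := Finset.exists_mem_eq_inf' (Finset.univ_nonempty)
      (fun i : Fin (2^k+1) =>
        if ∑ j, M j (((i : ℕ) : ℝ) / 2^k) ≤ c then ((i : ℕ) : ℝ) / 2^k else (1:ℝ))
    rw [hie]
    split_ifs
    · exact Set.mem_insert_iff.2 (Or.inr (Set.mem_insert_iff.2 (Or.inr ⟨i, rfl⟩)))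
    · exact Set.mem_insert_iff.2 (Or.inr (Set.mem_insert_iff.2 (Or.inl rfl)))
  · exact Set.mem_insert _ _

lemma measurable_evalAtEk (j : Fin (n+1)) (k : ℕ) (c lamMax : ℝ) :
    Measurable fun M : Fin (n+1) → ℝ → ℝ => M j (ek k M c lamMax) := by
  refine measurable_comp_countable (measurable_ek k c lamMax)
    ((Set.countable_range _).insert 1 |>.insert lamMax) (ek_mem_range k c lamMax)
    fun q _ => measurable_eval j q

lemma measurable_G (j : Fin (n+1)) (c lamMax : ℝ) : Measurable (G j c lamMax) :=
  Measurable.liminf fun k => measurable_evalAtEk j k c lamMax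

lemma sum_comp_perm (σ : Equiv.Perm (Fin (n+1))) (M : Fin (n+1) → ℝ → ℝ) (t : ℝ) :
    ∑ i, M (σ i) t = ∑ i, M i t :=
  Equiv.sum_comp σ (fun i => M i t)

lemma fullSet_perm (σ : Equiv.Perm (Fin (n+1))) (M : Fin (n+1) → ℝ → ℝ) (c : ℝ) :
    fullSet (fun i => M (σ i)) c = fullSet M c := by
  ext x; simp [fullSet, sum_comp_perm σ M x]

lemma lamStar_perm (σ : Equiv.Perm (Fin (n+1))) (M : Fin (n+1) → ℝ → ℝ) (c lamMax : ℝ) :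
    lamStar (fun i => M (σ i)) c lamMax = lamStar M c lamMax := by
  unfold lamStar; rw [fullSet_perm]

lemma ek_perm (σ : Equiv.Perm (Fin (n+1))) (k : ℕ) (M : Fin (n+1) → ℝ → ℝ) (c lamMax : ℝ) :
    ek k (fun i => M (σ i)) c lamMax = ek k M c lamMax := by
  unfold ek; simp_rw [sum_comp_perm σ M]


section Pointwise

variable {M : Fin (n+1) → ℝ → ℝ} {c lamMax B α : ℝ}

lemma sum_antitone (hmono : ∀ i, AntitoneOn (M i) (Set.Icc (0:ℝ) 1)) :
    AntitoneOn (fun t => ∑ i, M i t) (Set.Icc (0:ℝ) 1) := fun a ha b hb hab =>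
  Finset.sum_le_sum fun i _ => hmono i ha hb hab

lemma fullSet_nonempty_iff (hmono : ∀ i, AntitoneOn (M i) (Set.Icc (0:ℝ) 1)) :
    (fullSet M c).Nonempty ↔ ∑ i, M i 1 ≤ c := by
  constructor
  · rintro ⟨x, hx1, hx2⟩
    exact le_trans (sum_antitone hmono hx1 (by simp) hx1.2) hx2
  · intro h
    exact ⟨1, ⟨by norm_num, le_refl 1⟩, h⟩

lemma bddBelow_fullSet : BddBelow (fullSet M c) := ⟨0, fun x hx => hx.1.1⟩

lemma sInf_fullSet_mem_Icc (h : (fullSet M c).Nonempty) :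
    sInf (fullSet M c) ∈ Set.Icc (0:ℝ) 1 := by
  obtain ⟨x, hx⟩ := h
  exact ⟨le_csInf ⟨x, hx⟩ fun y hy => hy.1.1, le_trans (csInf_le bddBelow_fullSet hx) hx.1.2⟩

lemma fullSet_subset_Icc (h : (fullSet M c).Nonempty) :
    fullSet M c ⊆ Set.Icc (sInf (fullSet M c)) 1 := fun x hx =>
  ⟨csInf_le bddBelow_fullSet hx, hx.1.2⟩

lemma sInf_fullSet_mem (hmono : ∀ i, AntitoneOn (M i) (Set.Icc (0:ℝ) 1))
    (hrc : ∀ i, ∀ lam ∈ Set.Icc (0:ℝ) 1, ContinuousWithinAt (M i) (Set.Icc lam 1) lam)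
    (h : (fullSet M c).Nonempty) :
    sInf (fullSet M c) ∈ fullSet M c := by
  set t := sInf (fullSet M c) with ht
  have htIcc : t ∈ Set.Icc (0:ℝ) 1 := sInf_fullSet_mem_Icc h
  refine ⟨htIcc, ?_⟩
  have hcont : Tendsto (fun u => ∑ i, M i u) (𝓝[Set.Icc t 1] t) (𝓝 (∑ i, M i t)) :=
    tendsto_finset_sum _ fun i _ => hrc i t htIcc
  have hmonoF : Tendsto (fun u => ∑ i, M i u) (𝓝[fullSet M c] t) (𝓝 (∑ i, M i t)) :=
    hcont.mono_left (nhdsWithin_mono t (fullSet_subset_Icc h))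
  have hne : (𝓝[fullSet M c] t).NeBot :=
    mem_closure_iff_nhdsWithin_neBot.1 (csInf_mem_closure h bddBelow_fullSet)
  exact le_of_tendsto hmonoF (eventually_nhdsWithin_of_forall fun x hx => hx.2)

lemma Icc_subset_fullSet (hmono : ∀ i, AntitoneOn (M i) (Set.Icc (0:ℝ) 1))
    (hrc : ∀ i, ∀ lam ∈ Set.Icc (0:ℝ) 1, ContinuousWithinAt (M i) (Set.Icc lam 1) lam)
    (h : (fullSet M c).Nonempty) :
    Set.Icc (sInf (fullSet M c)) 1 ⊆ fullSet M c := by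
  intro x hx
  have htIcc := sInf_fullSet_mem_Icc (c := c) h
  have hxIcc : x ∈ Set.Icc (0:ℝ) 1 := ⟨le_trans htIcc.1 hx.1, hx.2⟩
  refine ⟨hxIcc, le_trans (sum_antitone hmono htIcc hxIcc hx.1)
    (sInf_fullSet_mem hmono hrc h).2⟩

lemma lamStar_mem_Icc (hlM : lamMax ∈ Set.Icc (0:ℝ) 1) :
    lamStar M c lamMax ∈ Set.Icc (0:ℝ) 1 := by
  unfold lamStar
  split_ifs with h
  · exact sInf_fullSet_mem_Icc h
  · exact hlM

lemma sum_lamStar_le (hmono : ∀ i, AntitoneOn (M i) (Set.Icc (0:ℝ) 1))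
    (hrc : ∀ i, ∀ lam ∈ Set.Icc (0:ℝ) 1, ContinuousWithinAt (M i) (Set.Icc lam 1) lam)
    (hA : ∑ i, M i lamMax ≤ c) :
    ∑ i, M i (lamStar M c lamMax) ≤ c := by
  unfold lamStar
  split_ifs with h
  · exact (sInf_fullSet_mem hmono hrc h).2
  · exact hA

lemma ek_bounds (hmono : ∀ i, AntitoneOn (M i) (Set.Icc (0:ℝ) 1))
    (hrc : ∀ i, ∀ lam ∈ Set.Icc (0:ℝ) 1, ContinuousWithinAt (M i) (Set.Icc lam 1) lam)
    (h : (fullSet M c).Nonempty) (k : ℕ) :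
    ek k M c lamMax ∈ Set.Icc (sInf (fullSet M c)) 1 ∧
      ek k M c lamMax ≤ sInf (fullSet M c) + (1/2)^k := by
  set t := sInf (fullSet M c) with ht
  have htIcc : t ∈ Set.Icc (0:ℝ) 1 := sInf_fullSet_mem_Icc h
  have h1 : ∑ i, M i 1 ≤ c := (fullSet_nonempty_iff hmono).1 h
  have hpow : (0:ℝ) < 2^k := by positivity
  unfold ek
  rw [if_pos h1]
  set g : Fin (2^k+1) → ℝ := fun i =>
    if ∑ j, M j (((i : ℕ) : ℝ) / 2^k) ≤ c then ((i : ℕ) : ℝ) / 2^k else 1 with hg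
  constructor
  · -- inf' attained, value in fullSet
    obtain ⟨i, _, hie⟩ := Finset.exists_mem_eq_inf' (Finset.univ_nonempty) g
    rw [hie]
    have : g i ∈ fullSet M c := by
      rw [hg]
      dsimp only
      split_ifs with hcond
      · have h0 : (0:ℝ) ≤ ((i : ℕ) : ℝ) / 2^k := by positivity
        have h1' : ((i : ℕ) : ℝ) / 2^k ≤ 1 := by
          rw [div_le_one hpow]
          have : (i : ℕ) ≤ 2^k := Nat.lt_succ_iff.1 i.isLt
          exact_mod_cast this
        exact ⟨⟨h0, h1'⟩, hcond⟩
      · exact ⟨⟨by norm_num, le_refl 1⟩, h1⟩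
    exact fullSet_subset_Icc h this
  · -- upper bound via dyadic ceiling
    have ht0 : 0 ≤ t := htIcc.1
    have ht1 : t ≤ 1 := htIcc.2
    set m : ℕ := ⌈t * 2^k⌉₊ with hm
    have hm2 : m ≤ 2^k := by
      rw [hm, Nat.ceil_le]
      calc t * 2^k ≤ 1 * 2^k := by nlinarith
      _ = ((2^k : ℕ) : ℝ) := by push_cast; ring
    have hilt : m < 2^k + 1 := Nat.lt_succ_of_le hm2
    set i : Fin (2^k+1) := ⟨m, hilt⟩ with hi
    have hq_ge : t ≤ (m : ℝ) / 2^k := by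
      rw [le_div_iff₀ hpow, hm]
      exact Nat.le_ceil (t * 2^k)
    have hq_le1 : (m : ℝ) / 2^k ≤ 1 := by
      rw [div_le_one hpow]; exact_mod_cast hm2
    have hqfull : ((m : ℝ) / 2^k) ∈ fullSet M c :=
      Icc_subset_fullSet hmono hrc h ⟨hq_ge, hq_le1⟩
    have hgi : g i = (m : ℝ) / 2^k := by
      rw [hg]; dsimp only [hi]; rw [if_pos hqfull.2]
    have hle : Finset.univ.inf' Finset.univ_nonempty g ≤ g i :=
      Finset.inf'_le g (Finset.mem_univ i)
    have hq_lt : (m : ℝ) / 2^k ≤ t + (1/2)^k := by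
      have hceil : (m : ℝ) < t * 2^k + 1 :=
        Nat.ceil_lt_add_one (by positivity)
      rw [div_le_iff₀ hpow]
      have : (t + (1/2)^k) * 2^k = t * 2^k + 1 := by
        rw [add_mul, ← mul_pow]; norm_num
      rw [this]
      linarith
    calc Finset.univ.inf' Finset.univ_nonempty g ≤ g i := hle
    _ = (m : ℝ) / 2^k := hgi
    _ ≤ t + (1/2)^k := hq_lt

lemma tendsto_evalAtEk (hmono : ∀ i, AntitoneOn (M i) (Set.Icc (0:ℝ) 1))
    (hrc : ∀ i, ∀ lam ∈ Set.Icc (0:ℝ) 1, ContinuousWithinAt (M i) (Set.Icc lam 1) lam)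
    (hlM : lamMax ∈ Set.Icc (0:ℝ) 1) (j : Fin (n+1)) :
    Tendsto (fun k => M j (ek k M c lamMax)) atTop (𝓝 (M j (lamStar M c lamMax))) := by
  by_cases h : (fullSet M c).Nonempty
  · set t := sInf (fullSet M c) with ht
    have htIcc : t ∈ Set.Icc (0:ℝ) 1 := sInf_fullSet_mem_Icc h
    have hlamStar : lamStar M c lamMax = t := if_pos h
    rw [hlamStar]
    have hup : Tendsto (fun k : ℕ => t + (1/2)^k) atTop (𝓝 t) := by
      have := tendsto_pow_atTop_nhds_zero_of_lt_one (by norm_num : (0:ℝ) ≤ 1/2)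
        (by norm_num : (1/2:ℝ) < 1)
      have h2 := this.const_add t
      simpa using h2
    have hek : Tendsto (fun k => ek k M c lamMax) atTop (𝓝 t) := by
      refine tendsto_of_tendsto_of_tendsto_of_le_of_le tendsto_const_nhds hup
        (fun k => ((ek_bounds (lamMax := lamMax) hmono hrc h k).1).1)
        (fun k => (ek_bounds (lamMax := lamMax) hmono hrc h k).2)
    have hekW : Tendsto (fun k => ek k M c lamMax) atTop (𝓝[Set.Icc t 1] t) :=
      tendsto_nhdsWithin_of_tendsto_nhds_of_eventually_within _ hek
        (Eventually.of_forall fun k => (ek_bounds (lamMax := lamMax) hmono hrc h k).1)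
    exact (hrc j t htIcc).tendsto.comp hekW
  · have h1 : ¬ (∑ i, M i 1 ≤ c) := fun hc => h ((fullSet_nonempty_iff hmono).2 hc)
    have hlamStar : lamStar M c lamMax = lamMax := if_neg h
    have hek : ∀ k, ek k M c lamMax = lamMax := fun k => if_neg h1
    rw [hlamStar]
    simp_rw [hek]
    exact tendsto_const_nhds

lemma G_eq (hmono : ∀ i, AntitoneOn (M i) (Set.Icc (0:ℝ) 1))
    (hrc : ∀ i, ∀ lam ∈ Set.Icc (0:ℝ) 1, ContinuousWithinAt (M i) (Set.Icc lam 1) lam)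
    (hlM : lamMax ∈ Set.Icc (0:ℝ) 1) (j : Fin (n+1)) :
    G j c lamMax M = M j (lamStar M c lamMax) :=
  (tendsto_evalAtEk hmono hrc hlM j).liminf_eq

end Pointwise

end CRCaux


namespace CRCaux

variable {n : ℕ} {M : Fin (n+1) → ℝ → ℝ} {c lamMax B α : ℝ}

lemma crcSet_subset_fullSet (hn : 0 < n) (hc : c = ((n:ℝ)+1) * α)
    (hB : ∀ lam ∈ Set.Icc (0:ℝ) 1, M (Fin.last n) lam ≤ B) :
    crcSet M B α ⊆ fullSet M c := by
  rintro x ⟨hx1, hx2⟩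
  refine ⟨hx1, ?_⟩
  have hn' : (0:ℝ) < n := by exact_mod_cast hn
  have hn1 : (0:ℝ) < (n:ℝ) + 1 := by linarith
  set s : ℝ := ∑ i : Fin n, M i.castSucc x with hs
  have hrw : ((n : ℝ) / (n + 1)) * ((1 / (n : ℝ)) * s) = s / (n + 1) := by
    field_simp
  rw [hrw] at hx2
  have hsum : ∑ i : Fin (n+1), M i x = s + M (Fin.last n) x := by
    rw [hs, Fin.sum_univ_castSucc]
  rw [hsum, hc]
  have hlast : M (Fin.last n) x ≤ B := hB x hx1
  have : s + B ≤ ((n:ℝ)+1) * α := by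
    rw [← add_div, div_le_iff₀ hn1] at hx2
    linarith
  linarith

lemma lamStar_le_lamHat (hn : 0 < n) (hc : c = ((n:ℝ)+1) * α)
    (hlM : lamMax ∈ Set.Icc (0:ℝ) 1)
    (hA : ∑ i, M i lamMax ≤ c)
    (hB : ∀ lam ∈ Set.Icc (0:ℝ) 1, M (Fin.last n) lam ≤ B) :
    lamStar M c lamMax ≤ lamHat M B α lamMax := by
  have hsub := crcSet_subset_fullSet (M := M) hn hc hB
  unfold lamStar lamHat
  by_cases h1 : (fullSet M c).Nonempty
  · rw [if_pos h1]
    by_cases h2 : (crcSet M B α).Nonempty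
    · rw [if_pos h2]
      exact csInf_le_csInf bddBelow_fullSet h2 hsub
    · rw [if_neg h2]
      exact csInf_le bddBelow_fullSet ⟨hlM, hA⟩
  · rw [if_neg h1]
    have h2 : ¬ (crcSet M B α).Nonempty := fun hne => h1 (hne.mono hsub)
    rw [if_neg h2]

lemma lamHat_mem_Icc (hlM : lamMax ∈ Set.Icc (0:ℝ) 1) :
    lamHat M B α lamMax ∈ Set.Icc (0:ℝ) 1 := by
  unfold lamHat
  split_ifs with h
  · obtain ⟨x, hx⟩ := h
    have hb : BddBelow (crcSet M B α) := ⟨0, fun y hy => hy.1.1⟩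
    exact ⟨le_csInf ⟨x, hx⟩ fun y hy => hy.1.1, le_trans (csInf_le hb hx) hx.1.2⟩
  · exact hlM

end CRCaux


open CRCaux

/-- Conformal Risk Control (Theorem 1 of Angelopoulos et al.):
if `L 1, …, L (n+1)` are exchangeable random non-increasing, right-continuous
functions on `[0,1]` bounded above by `B`, and `L i (λ_max) ≤ α` almost surely,
then `E[L (n+1) (λ̂)] ≤ α`. -/
theorem stmt_11 {Ω : Type*} [MeasurableSpace Ω] (μ : Measure Ω) [IsProbabilityMeasure μ]
    {n : ℕ} (hn : 0 < n) (L : Fin (n + 1) → Ω → ℝ → ℝ) (B α lamMax : ℝ)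
    (hmeas : Measurable fun ω => (fun i => L i ω : Fin (n + 1) → ℝ → ℝ))
    (hmono : ∀ i ω, AntitoneOn (L i ω) (Set.Icc (0:ℝ) 1))
    (hrc : ∀ i ω, ∀ lam ∈ Set.Icc (0:ℝ) 1,
      ContinuousWithinAt (L i ω) (Set.Icc lam 1) lam)
    (hbdd : ∀ i ω, ∀ lam ∈ Set.Icc (0:ℝ) 1, L i ω lam ≤ B)
    (hlamMax : lamMax ∈ Set.Icc (0:ℝ) 1)
    (hmax : ∀ i, ∀ᵐ ω ∂μ, L i ω lamMax ≤ α)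
    (hexch : ∀ σ : Equiv.Perm (Fin (n + 1)),
      Measure.map (fun ω => (fun i => L (σ i) ω : Fin (n + 1) → ℝ → ℝ)) μ
        = Measure.map (fun ω => (fun i => L i ω : Fin (n + 1) → ℝ → ℝ)) μ)
    (hint : Integrable
      (fun ω => L (Fin.last n) ω (lamHat (fun i => L i ω) B α lamMax)) μ) :
    ∫ ω, L (Fin.last n) ω (lamHat (fun i => L i ω) B α lamMax) ∂μ ≤ α := by
  classical
  set c : ℝ := ((n:ℝ)+1) * α with hc
  have hGf : ∀ (j : Fin (n+1)) ω, G j c lamMax (fun i => L i ω)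
      = L j ω (lamStar (fun i => L i ω) c lamMax) :=
    fun j ω => G_eq (fun i => hmono i ω) (fun i => hrc i ω) hlamMax j
  have hA : ∀ᵐ ω ∂μ, ∀ i, L i ω lamMax ≤ α := ae_all_iff.2 hmax
  have hsumA : ∀ᵐ ω ∂μ, ∑ i, L i ω lamMax ≤ c := by
    filter_upwards [hA] with ω hω
    calc ∑ i, L i ω lamMax ≤ ∑ _i : Fin (n+1), α := Finset.sum_le_sum fun i _ => hω i
    _ = c := by
        rw [Finset.sum_const, Finset.card_univ, Fintype.card_fin, nsmul_eq_mul, hc]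
        push_cast; ring
  have haeLam : ∀ᵐ ω ∂μ,
      L (Fin.last n) ω (lamHat (fun i => L i ω) B α lamMax)
        ≤ L (Fin.last n) ω (lamStar (fun i => L i ω) c lamMax) := by
    filter_upwards [hsumA] with ω hω
    have hstar_le := lamStar_le_lamHat (M := fun i => L i ω) hn hc hlamMax hω
      (fun lam hlam => hbdd _ ω lam hlam)
    exact hmono (Fin.last n) ω (lamStar_mem_Icc hlamMax) (lamHat_mem_Icc hlamMax) hstar_le
  have hmeasLam : ∀ j : Fin (n+1),
      Measurable fun ω => L j ω (lamStar (fun i => L i ω) c lamMax) := by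
    intro j
    have h1 := (measurable_G j c lamMax).comp hmeas
    have heq : (fun ω => L j ω (lamStar (fun i => L i ω) c lamMax))
        = fun ω => G j c lamMax (fun i => L i ω) := funext fun ω => (hGf j ω).symm
    rw [heq]; exact h1
  have hint' : Integrable (fun ω => L (Fin.last n) ω (lamStar (fun i => L i ω) c lamMax)) μ := by
    refine Integrable.mono' (hint.abs.add (integrable_const |B|))
      (hmeasLam _).aestronglyMeasurable ?_
    filter_upwards [haeLam] with ω h
    simp only [Pi.add_apply]
    have hub : L (Fin.last n) ω (lamStar (fun i => L i ω) c lamMax) ≤ B :=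
      hbdd _ ω _ (lamStar_mem_Icc hlamMax)
    rw [Real.norm_eq_abs, abs_le]
    constructor
    · linarith [abs_nonneg B,
        neg_abs_le (L (Fin.last n) ω (lamHat (fun i => L i ω) B α lamMax))]
    · linarith [abs_nonneg (L (Fin.last n) ω (lamHat (fun i => L i ω) B α lamMax)),
        le_abs_self B]
  have key : ∀ i : Fin (n+1),
      (∫ ω, L i ω (lamStar (fun i' => L i' ω) c lamMax) ∂μ
        = ∫ ω, L (Fin.last n) ω (lamStar (fun i' => L i' ω) c lamMax) ∂μ)
      ∧ Integrable (fun ω => L i ω (lamStar (fun i' => L i' ω) c lamMax)) μ := by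
    intro i
    set σ : Equiv.Perm (Fin (n+1)) := Equiv.swap i (Fin.last n) with hσ
    have hfσ : Measurable (fun ω => (fun j => L (σ j) ω : Fin (n+1) → ℝ → ℝ)) :=
      measurable_pi_lambda _ fun j => (measurable_pi_apply (σ j)).comp hmeas
    have hGσ : ∀ ω, G (Fin.last n) c lamMax (fun j => L (σ j) ω)
        = L i ω (lamStar (fun i' => L i' ω) c lamMax) := by
      intro ω
      have h1 : G (Fin.last n) c lamMax (fun j => L (σ j) ω)
          = L (σ (Fin.last n)) ω (lamStar (fun j => L (σ j) ω) c lamMax) :=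
        G_eq (fun j => hmono (σ j) ω) (fun j => hrc (σ j) ω) hlamMax (Fin.last n)
      rw [h1, lamStar_perm σ (fun i' => L i' ω) c lamMax, hσ, Equiv.swap_apply_right]
    have hGsm : AEStronglyMeasurable (G (Fin.last n) c lamMax)
        (Measure.map (fun ω => (fun j => L j ω : Fin (n+1) → ℝ → ℝ)) μ) :=
      (measurable_G _ _ _).aestronglyMeasurable
    have hGsmσ : AEStronglyMeasurable (G (Fin.last n) c lamMax)
        (Measure.map (fun ω => (fun j => L (σ j) ω : Fin (n+1) → ℝ → ℝ)) μ) := by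
      rw [hexch σ]; exact hGsm
    constructor
    · have e1 : ∫ ω, L i ω (lamStar (fun i' => L i' ω) c lamMax) ∂μ
          = ∫ m, G (Fin.last n) c lamMax m
              ∂(Measure.map (fun ω => (fun j => L (σ j) ω : Fin (n+1) → ℝ → ℝ)) μ) := by
        rw [integral_map hfσ.aemeasurable hGsmσ]
        exact integral_congr_ae (Filter.Eventually.of_forall fun ω => (hGσ ω).symm)
      have e2 : ∫ ω, L (Fin.last n) ω (lamStar (fun i' => L i' ω) c lamMax) ∂μ
          = ∫ m, G (Fin.last n) c lamMax m
              ∂(Measure.map (fun ω => (fun j => L j ω : Fin (n+1) → ℝ → ℝ)) μ) := by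
        rw [integral_map hmeas.aemeasurable hGsm]
        exact integral_congr_ae (Filter.Eventually.of_forall fun ω => (hGf _ ω).symm)
      rw [e1, e2, hexch σ]
    · have i1 : Integrable (G (Fin.last n) c lamMax)
          (Measure.map (fun ω => (fun j => L j ω : Fin (n+1) → ℝ → ℝ)) μ) := by
        rw [integrable_map_measure hGsm hmeas.aemeasurable]
        exact hint'.congr (Filter.Eventually.of_forall fun ω => (hGf _ ω).symm)
      have i2 := (integrable_map_measure hGsmσ hfσ.aemeasurable).1 (by rw [hexch σ]; exact i1)
      exact i2.congr (Filter.Eventually.of_forall fun ω => hGσ ω)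
  have hint_i : ∀ i : Fin (n+1),
      Integrable (fun ω => L i ω (lamStar (fun i' => L i' ω) c lamMax)) μ := fun i => (key i).2
  have hsum_ae : ∀ᵐ ω ∂μ, ∑ i, L i ω (lamStar (fun i' => L i' ω) c lamMax) ≤ c := by
    filter_upwards [hsumA] with ω hω
    exact sum_lamStar_le (fun i => hmono i ω) (fun i => hrc i ω) hω
  have hsum_int : Integrable (fun ω => ∑ i, L i ω (lamStar (fun i' => L i' ω) c lamMax)) μ :=
    integrable_finset_sum _ fun i _ => hint_i i
  have h7 : ∫ ω, (∑ i, L i ω (lamStar (fun i' => L i' ω) c lamMax)) ∂μ ≤ c := by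
    refine le_trans (integral_mono_ae hsum_int (integrable_const c) hsum_ae) ?_
    simp
  have h8 : ∫ ω, (∑ i, L i ω (lamStar (fun i' => L i' ω) c lamMax)) ∂μ
      = ((n:ℝ)+1) * ∫ ω, L (Fin.last n) ω (lamStar (fun i' => L i' ω) c lamMax) ∂μ := by
    rw [integral_finset_sum _ fun i _ => hint_i i,
      Finset.sum_congr rfl (fun i _ => (key i).1), Finset.sum_const, Finset.card_univ,
      Fintype.card_fin, nsmul_eq_mul]
    push_cast; ring
  have hI : ∫ ω, L (Fin.last n) ω (lamStar (fun i' => L i' ω) c lamMax) ∂μ ≤ α := by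
    have hn1 : (0:ℝ) < (n:ℝ)+1 := by positivity
    rw [h8, hc] at h7
    exact (mul_le_mul_iff_right₀ hn1).1 h7
  exact le_trans (integral_mono_ae hint hint' haeLam) hI
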